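/- Let μ : X → ℝ be L-Lipschitz on a metric space X, let c ∈ X with estimate μ̂_c and confidence width ε_c satisfying |μ̂_c − μ_c| ≤ ε_c, and let a ∈ X with |μ̂_a − μ_a| ≤ ε_a. Suppose μ̂_c + 2ε_c < μ̂_a − ε_a. Then every b ∈ X with d(b, c) ≤ ε_c/L satisfies μ_b < μ_a. In particular, no arm in the ball B(c, ε_c/L) is optimal. -/

import Mathlib

lemma le_add_of_dist_le_div {X : Type*} [PseudoMetricSpace X] {L r : ℝ} (hL : 0 < L)
    {f : X → ℝ} (hf : ∀ x y : X, |f x - f y| ≤ L * dist x y) {b c : X}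
    (hbc : dist b c ≤ r / L) : f b ≤ f c + r := by
  have hLip : f b - f c ≤ L * dist b c := (abs_le.mp (hf b c)).2
  have hdist : L * dist b c ≤ r := (le_div_iff₀' hL).mp hbc
  linarith

/-- Correctness of the elimination rule: if μ̂_c + 2ε_c < μ̂_a − ε_a, then
every arm in the ball of radius ε_c/L around c has mean strictly below μ_a. -/
theorem stmt_8 {X : Type*} [MetricSpace X] (L : ℝ) (hL : 0 < L)
    (μ : X → ℝ) (hμ : ∀ x y : X, |μ x - μ y| ≤ L * dist x y)
    (c a : X) (μhatc μhata εc εa : ℝ)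
    (hconfc : |μhatc - μ c| ≤ εc) (hconfa : |μhata - μ a| ≤ εa)
    (helim : μhatc + 2 * εc < μhata - εa) :
    ∀ b : X, dist b c ≤ εc / L → μ b < μ a := by
  intro b hb
  calc μ b ≤ μ c + εc := le_add_of_dist_le_div hL hμ hb
    _ ≤ μhatc + 2 * εc := by linarith [(abs_le.mp hconfc).1]
    _ < μhata - εa := helim
    _ ≤ μ a := by linarith [(abs_le.mp hconfa).2]
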